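/- arXiv:2512.22719 — 2 statements merged into one kernel-verified Lean document; each statement's English description precedes it below -/
import Mathlib

section
/- There exists a constant C(γ) > 0, depending only on γ, such that for all ρ > 0, m ∈ ℝ and ρ∞ > 0, the function m ↦ η̃(ρ, m) is differentiable and |∂_mη̃(ρ, m)| ≤ C(γ)(|ρ^θ − ρ∞^θ| + |m|/ρ), where η̃(ρ, m) = η̆(ρ, m) − c₀ρ∞^θ m is the relative entropy obtained from η̆ by subtracting its linearization at (ρ∞, 0). -/
open Real MeasureTheory

/-- `θ = (γ − 1)/2`. -/
noncomputable def thetaExp (γ : ℝ) : ℝ := (γ - 1) / 2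

/-- `λ = (3 − γ)/(2(γ − 1))`. -/
noncomputable def lamExp (γ : ℝ) : ℝ := (3 - γ) / (2 * (γ - 1))

/-- The weak entropy of the isentropic Euler system with polytropic pressure, generated by `ψ`:
`η^ψ(ρ, u) = ρ ∫_{−1}^{1} ψ(u + ρ^θ s)(1 − s²)^λ ds`. -/
noncomputable def entropy (γ : ℝ) (ψ : ℝ → ℝ) (ρ u : ℝ) : ℝ :=
  ρ * ∫ s in (-1:ℝ)..1, ψ (u + ρ ^ thetaExp γ * s) * (1 - s ^ 2) ^ lamExp γ

/-- The weak entropy flux generated by `ψ`: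
`q^ψ(ρ, u) = ρ ∫_{−1}^{1} (u + θρ^θ s) ψ(u + ρ^θ s)(1 − s²)^λ ds`. -/
noncomputable def entropyFlux (γ : ℝ) (ψ : ℝ → ℝ) (ρ u : ℝ) : ℝ :=
  ρ * ∫ s in (-1:ℝ)..1,
    (u + thetaExp γ * ρ ^ thetaExp γ * s) * ψ (u + ρ ^ thetaExp γ * s) * (1 - s ^ 2) ^ lamExp γ

/-- The weak entropy `η̆ = η^ψ` generated by `ψ(s) = ½ s|s|`, in the conserved variables
`(ρ, m)` via `u = m/ρ`. -/
noncomputable def breveEntropyM (γ : ℝ) (ρ m : ℝ) : ℝ :=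
  entropy γ (fun s => s * |s| / 2) ρ (m / ρ)

/-- `c₀ = ∫_{−1}^{1} |s|(1 − s²)^λ ds`. -/
noncomputable def cZero (γ : ℝ) : ℝ := ∫ s in (-1:ℝ)..1, |s| * (1 - s ^ 2) ^ lamExp γ

/-! The generator `ψ(s) = s|s|/2` has `ψ' = |·|`, so differentiating `η̆(ρ, m) = ρ ∫ ψ(m/ρ + ρ^θ s) w(s) ds`
(with `w(s) = (1 − s²)^λ`) under the integral gives `∂_m η̆ = ∫ |m/ρ + ρ^θ s| w(s) ds`, while
`c₀ρ∞^θ = ∫ |ρ∞^θ s| w(s) ds`. By the reverse triangle inequality the two integrands differ by at most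
`(|m|/ρ + |ρ^θ − ρ∞^θ|) w(s)` on `[−1, 1]`, so `C(γ) = ∫ w` works; it is finite because `λ > −1`. -/

open Set

theorem neg_one_lt_lamExp {γ : ℝ} (hγ : 1 < γ) : -1 < lamExp γ := by
  rw [lamExp, lt_div_iff₀ (by linarith)]
  linarith

theorem intervalIntegrable_one_sub_sq_rpow {r : ℝ} (hr : -1 < r) :
    IntervalIntegrable (fun s : ℝ => (1 - s ^ 2) ^ r) volume (-1) 1 := by
  -- `1 − s² = (1 − s)(1 + s)`, and on each half of `[−1, 1]` only one factor vanishes.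
  have hleft : IntervalIntegrable (fun s : ℝ => (1 - s) ^ r * (1 + s) ^ r) volume (-1) 0 := by
    refine IntervalIntegrable.continuousOn_mul ?_ ?_
    · simpa using (intervalIntegral.intervalIntegrable_rpow' hr (a := 0) (b := 1)).comp_add_left 1
    · refine (continuousOn_const.sub continuousOn_id).rpow_const fun s hs => Or.inl ?_
      have := (uIcc_of_le (by norm_num : (-1 : ℝ) ≤ 0) ▸ hs).2
      exact (show (0 : ℝ) < 1 - s by linarith).ne'
  have hright : IntervalIntegrable (fun s : ℝ => (1 - s) ^ r * (1 + s) ^ r) volume 0 1 := by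
    refine IntervalIntegrable.mul_continuousOn ?_ ?_
    · simpa using (intervalIntegral.intervalIntegrable_rpow' hr (a := 1) (b := 0)).comp_sub_left 1
    · refine (continuousOn_const.add continuousOn_id).rpow_const fun s hs => Or.inl ?_
      have := (uIcc_of_le (by norm_num : (0 : ℝ) ≤ 1) ▸ hs).1
      exact (show (0 : ℝ) < 1 + s by linarith).ne'
  refine (hleft.trans hright).congr_ae ?_
  filter_upwards [ae_restrict_mem measurableSet_uIoc] with s hs
  rw [uIoc_of_le (by norm_num)] at hs
  rw [← mul_rpow (by linarith [hs.2]) (by linarith [hs.1])]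
  ring_nf

theorem hasDerivAt_mul_abs_div_two (x : ℝ) : HasDerivAt (fun y : ℝ => y * |y| / 2) |x| x := by
  refine hasDerivAt_of_hasDerivAt_of_ne' (x := 0) (fun y hy => ?_) (by fun_prop) (by fun_prop) x
  exact (((hasDerivAt_id' y).mul (hasDerivAt_abs hy)).div_const 2).congr_deriv
    (by rw [self_mul_sign]; ring)

theorem hasDerivAt_integral_comp_add_mul_mul {ψ ψ' w : ℝ → ℝ}
    (hψ : ∀ x, HasDerivAt ψ (ψ' x) x) (hψ' : Continuous ψ') {a b : ℝ}
    (hw : IntervalIntegrable w volume a b) (c u : ℝ) :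
    HasDerivAt (fun v => ∫ s in a..b, ψ (v + c * s) * w s)
      (∫ s in a..b, ψ' (u + c * s) * w s) u := by
  have hψc : Continuous ψ := continuous_iff_continuousAt.2 fun x => (hψ x).continuousAt
  obtain ⟨K, hK⟩ := ((isCompact_closedBall u 1).prod (isCompact_uIcc (a := a) (b := b))
    ).exists_bound_of_continuousOn (f := fun p : ℝ × ℝ => ψ' (p.1 + c * p.2))
    (by fun_prop : Continuous _).continuousOn
  have hintegrable : ∀ {f : ℝ → ℝ}, Continuous f → ∀ x,
      IntervalIntegrable (fun s => f (x + c * s) * w s) volume a b := fun hf x =>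
    hw.continuousOn_mul (by fun_prop : Continuous _).continuousOn
  refine (intervalIntegral.hasDerivAt_integral_of_dominated_loc_of_deriv_le
    (F := fun x s => ψ (x + c * s) * w s) (F' := fun x s => ψ' (x + c * s) * w s)
    (bound := fun s => K * ‖w s‖) (Metric.ball_mem_nhds u one_pos)
    (.of_forall fun x => (hintegrable hψc x).def'.aestronglyMeasurable) (hintegrable hψc u)
    (hintegrable hψ' u).def'.aestronglyMeasurable ?_ (hw.norm.const_mul K) ?_).2
  · refine .of_forall fun s hs x hx => ?_
    rw [norm_mul]
    exact mul_le_mul_of_nonneg_right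
      (hK (x, s) ⟨Metric.ball_subset_closedBall hx, uIoc_subset_uIcc hs⟩) (norm_nonneg _)
  · exact .of_forall fun s _ x _ => ((hψ _).comp_add_const x (c * s)).mul_const (w s)

theorem hasDerivAt_breveEntropyM {γ ρ : ℝ} (hγ : 1 < γ) (hρ : ρ ≠ 0) (m : ℝ) :
    HasDerivAt (breveEntropyM γ ρ)
      (∫ s in (-1:ℝ)..1, |m / ρ + ρ ^ thetaExp γ * s| * (1 - s ^ 2) ^ lamExp γ) m := by
  have h := ((hasDerivAt_integral_comp_add_mul_mul hasDerivAt_mul_abs_div_two continuous_abs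
    (intervalIntegrable_one_sub_sq_rpow (neg_one_lt_lamExp hγ)) (ρ ^ thetaExp γ) (m / ρ)).comp m
    ((hasDerivAt_id' m).div_const ρ)).const_mul ρ
  exact h.congr_deriv (by field_simp)

theorem abs_abs_add_mul_sub_abs_mul_le {u c b s : ℝ} (hb : 0 ≤ b) (hs : |s| ≤ 1) :
    |(|u + c * s| - |s| * b)| ≤ |c - b| + |u| := by
  rw [show |s| * b = |s * b| by rw [abs_mul, abs_of_nonneg hb]]
  calc |(|u + c * s| - |s * b|)| ≤ |u + c * s - s * b| := abs_abs_sub_abs_le_abs_sub _ _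
    _ = |u + (c - b) * s| := by ring_nf
    _ ≤ |u| + |c - b| * |s| := (abs_add_le _ _).trans_eq (by rw [abs_mul])
    _ ≤ |c - b| + |u| := by nlinarith [abs_nonneg (c - b)]

theorem abs_integral_abs_add_mul_sub_le {w : ℝ → ℝ} (hw : IntervalIntegrable w volume (-1) 1)
    (hw₀ : ∀ s ∈ Ioc (-1 : ℝ) 1, 0 ≤ w s) (u c : ℝ) {b : ℝ} (hb : 0 ≤ b) :
    |(∫ s in (-1:ℝ)..1, |u + c * s| * w s) - (∫ s in (-1:ℝ)..1, |s| * w s) * b| ≤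
      (∫ s in (-1:ℝ)..1, w s) * (|c - b| + |u|) := by
  rw [← intervalIntegral.integral_mul_const, ← intervalIntegral.integral_sub
    (hw.continuousOn_mul (by fun_prop)) ((hw.continuousOn_mul (by fun_prop)).mul_const b),
    ← intervalIntegral.integral_mul_const]
  refine (Real.norm_eq_abs _).ge.trans (intervalIntegral.norm_integral_le_of_norm_le (by norm_num)
    (.of_forall fun s hs => ?_) (hw.mul_const _))
  have hs' : |s| ≤ 1 := abs_le.2 ⟨hs.1.le, hs.2⟩
  rw [Real.norm_eq_abs,
    show |u + c * s| * w s - |s| * w s * b = (|u + c * s| - |s| * b) * w s by ring,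
    abs_mul, abs_of_nonneg (hw₀ s hs), mul_comm (w s)]
  exact mul_le_mul_of_nonneg_right (abs_abs_add_mul_sub_abs_mul_le hb hs') (hw₀ s hs)

/-- For the relative entropy `η̃(ρ, m) = η̆(ρ, m) − c₀ρ∞^θ m`, the function `m ↦ η̃(ρ, m)`
is differentiable and `|∂_m η̃(ρ, m)| ≤ C(γ)(|ρ^θ − ρ∞^θ| + |m|/ρ)`. -/
theorem relEntropy_momentum_deriv_bound (γ : ℝ) (hγ : 1 < γ) :
    ∃ C : ℝ, 0 < C ∧ ∀ ρ : ℝ, 0 < ρ → ∀ ρinf : ℝ, 0 < ρinf → ∀ m : ℝ,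
      DifferentiableAt ℝ
        (fun m' => breveEntropyM γ ρ m' - cZero γ * ρinf ^ thetaExp γ * m') m ∧
      |deriv (fun m' => breveEntropyM γ ρ m' - cZero γ * ρinf ^ thetaExp γ * m') m| ≤
        C * (|ρ ^ thetaExp γ - ρinf ^ thetaExp γ| + |m| / ρ) := by
  have hw := intervalIntegrable_one_sub_sq_rpow (neg_one_lt_lamExp hγ)
  refine ⟨∫ s in (-1:ℝ)..1, (1 - s ^ 2) ^ lamExp γ,
    intervalIntegral.intervalIntegral_pos_of_pos_on hw
      (fun s hs => rpow_pos_of_pos (by nlinarith [hs.1, hs.2]) _) (by norm_num),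
    fun ρ hρ ρinf hρinf m => ?_⟩
  have hderiv := (hasDerivAt_breveEntropyM hγ hρ.ne' m).fun_sub
    ((hasDerivAt_id' m).const_mul (cZero γ * ρinf ^ thetaExp γ))
  refine ⟨hderiv.differentiableAt, ?_⟩
  rw [hderiv.deriv, mul_one, show |m| / ρ = |m / ρ| by rw [abs_div, abs_of_pos hρ]]
  exact abs_integral_abs_add_mul_sub_le hw
    (fun s hs => rpow_nonneg (by nlinarith [hs.1, hs.2]) _) _ _ (rpow_nonneg hρinf.le _)
end

section
/- Assume 1 < γ ≤ 3. Let ψ ∈ C²(ℝ) be convex and satisfy |ψ(s)| ≤ A s² and |ψ′(s)| ≤ A|s| for all s ∈ ℝ and some A > 0. Then there exists a constant C > 0, depending only on γ and A, such that for all ρ > 0 and u ∈ ℝ: |η^ψ(ρ, u)| + (1/ρ)|∂_uη^ψ(ρ, u)|² ≤ C(1 + ρu² + ρ^γ) and |q^ψ(ρ, u)| ≤ C(1 + ρ|u|³ + ρ^{γ+θ}). -/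
open Real MeasureTheory

lemma abs_one_sub_sq_rpow_le_one {lam s : ℝ} (hlam : 0 ≤ lam) (hs : |s| ≤ 1) :
    |(1 - s ^ 2) ^ lam| ≤ 1 := by
  have hs2 : s ^ 2 ≤ 1 := (sq_le_one_iff_abs_le_one s).mpr hs
  rw [abs_of_nonneg (rpow_nonneg (by linarith) lam)]
  exact rpow_le_one (by linarith) (by nlinarith [sq_nonneg s]) hlam

lemma abs_integral_mul_one_sub_sq_rpow_le {lam M : ℝ} {f : ℝ → ℝ} (hlam : 0 ≤ lam)
    (hf : ∀ s, |s| ≤ 1 → |f s| ≤ M) :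
    |∫ s in (-1:ℝ)..1, f s * (1 - s ^ 2) ^ lam| ≤ 2 * M := by
  have key := intervalIntegral.norm_integral_le_of_norm_le_const
    (f := fun s => f s * (1 - s ^ 2) ^ lam) (a := -1) (b := 1) (C := M) fun s hs => by
      rw [Set.uIoc_of_le (by norm_num)] at hs
      have hs1 : |s| ≤ 1 := abs_le.mpr ⟨hs.1.le, hs.2⟩
      calc ‖f s * (1 - s ^ 2) ^ lam‖ = |f s| * |(1 - s ^ 2) ^ lam| := abs_mul _ _
        _ ≤ M * 1 := mul_le_mul (hf s hs1) (abs_one_sub_sq_rpow_le_one hlam hs1)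
            (abs_nonneg _) ((abs_nonneg _).trans (hf s hs1))
        _ = M := mul_one M
  norm_num at key
  linarith

lemma abs_add_mul_le {u b s : ℝ} (hb : 0 ≤ b) (hs : |s| ≤ 1) : |u + b * s| ≤ |u| + b :=
  calc |u + b * s| ≤ |u| + b * |s| := by
        simpa [abs_mul, abs_of_nonneg hb] using abs_add_le u (b * s)
    _ ≤ |u| + b := by gcongr; exact mul_le_of_le_one_right hb hs

lemma hasDerivAt_integral_comp_add_mul {ψ g : ℝ → ℝ} {A : ℝ} (hψ : Differentiable ℝ ψ)
    (hψ' : ∀ x, |deriv ψ x| ≤ A * |x|) (hg : IntervalIntegrable g volume (-1) 1) (b u : ℝ) :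
    HasDerivAt (fun v => ∫ s in (-1:ℝ)..1, ψ (v + b * s) * g s)
      (∫ s in (-1:ℝ)..1, deriv ψ (u + b * s) * g s) u := by
  have hg_meas : AEStronglyMeasurable g (volume.restrict (Set.uIoc (-1:ℝ) 1)) := hg.def'.1
  have hF_meas (v : ℝ) : AEStronglyMeasurable (fun s => ψ (v + b * s) * g s)
      (volume.restrict (Set.uIoc (-1:ℝ) 1)) :=
    (hψ.continuous.comp (by fun_prop : Continuous fun s : ℝ => v + b * s)).aestronglyMeasurable
      |>.mul hg_meas
  have hF'_meas : AEStronglyMeasurable (fun s => deriv ψ (u + b * s) * g s)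
      (volume.restrict (Set.uIoc (-1:ℝ) 1)) :=
    ((measurable_deriv ψ).comp (by fun_prop : Measurable fun s : ℝ => u + b * s))
      |>.aestronglyMeasurable |>.mul hg_meas
  have hF_int : IntervalIntegrable (fun s => ψ (u + b * s) * g s) volume (-1) 1 :=
    hg.continuousOn_mul (hψ.continuous.comp (by fun_prop)).continuousOn
  refine (intervalIntegral.hasDerivAt_integral_of_dominated_loc_of_deriv_le
    (F' := fun v s => deriv ψ (v + b * s) * g s) (bound := fun s => A * (|u| + 1 + |b|) * |g s|)
    (Metric.ball_mem_nhds u one_pos) (Filter.Eventually.of_forall hF_meas) hF_int hF'_meas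
    ?_ (hg.norm.const_mul _) ?_).2
  · refine Filter.Eventually.of_forall fun s hs v hv => ?_
    rw [Set.uIoc_of_le (by norm_num)] at hs
    have hs1 : |s| ≤ 1 := abs_le.mpr ⟨hs.1.le, hs.2⟩
    have hvu : |v| ≤ |u| + 1 := by
      have := abs_sub_abs_le_abs_sub v u
      rw [Metric.mem_ball, dist_eq_norm, Real.norm_eq_abs] at hv
      linarith
    have hA : 0 ≤ A := by simpa using (abs_nonneg _).trans (hψ' 1)
    calc ‖deriv ψ (v + b * s) * g s‖ = |deriv ψ (v + b * s)| * |g s| := abs_mul _ _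
      _ ≤ A * (|u| + 1 + |b|) * |g s| := by
        gcongr
        calc |deriv ψ (v + b * s)| ≤ A * |v + b * s| := hψ' _
          _ ≤ A * (|u| + 1 + |b|) := by
            gcongr
            calc |v + b * s| ≤ |v| + |b| * |s| := by simpa [abs_mul] using abs_add_le v (b * s)
              _ ≤ |u| + 1 + |b| := by nlinarith [abs_nonneg b]
  · exact Filter.Eventually.of_forall fun s _ v _ =>
      ((hψ (v + b * s)).hasDerivAt.comp v ((hasDerivAt_id v).add_const (b * s))).mul_const (g s)
        |>.congr_deriv (by simp)

lemma self_mul_rpow_pow {ρ : ℝ} (hρ : 0 < ρ) (θ : ℝ) (n : ℕ) :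
    ρ * (ρ ^ θ) ^ n = ρ ^ (1 + n * θ) := by
  rw [← rpow_natCast, ← rpow_mul hρ.le, rpow_add hρ, rpow_one, mul_comm θ]

section PolytropicExponents

variable {γ : ℝ}

lemma thetaExp_pos (hγ : 1 < γ) : 0 < thetaExp γ := by
  unfold thetaExp; linarith

lemma thetaExp_le_one (hγ3 : γ ≤ 3) : thetaExp γ ≤ 1 := by
  unfold thetaExp; linarith

lemma lamExp_nonneg (hγ : 1 < γ) (hγ3 : γ ≤ 3) : 0 ≤ lamExp γ := by
  unfold lamExp; apply div_nonneg <;> linarith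

lemma self_mul_rpow_thetaExp_sq {ρ : ℝ} (hρ : 0 < ρ) :
    ρ * (ρ ^ thetaExp γ) ^ 2 = ρ ^ γ := by
  rw [self_mul_rpow_pow hρ]; unfold thetaExp; norm_num; ring_nf

lemma self_mul_rpow_thetaExp_cube {ρ : ℝ} (hρ : 0 < ρ) :
    ρ * (ρ ^ thetaExp γ) ^ 3 = ρ ^ (γ + thetaExp γ) := by
  rw [self_mul_rpow_pow hρ]; unfold thetaExp; norm_num; ring_nf

end PolytropicExponents

section EntropyBounds

variable {γ A ρ : ℝ} {ψ : ℝ → ℝ}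

lemma abs_entropy_le (hlam : 0 ≤ lamExp γ) (hA : 0 ≤ A) (hψ_bound : ∀ s, |ψ s| ≤ A * s ^ 2)
    (hρ : 0 < ρ) (u : ℝ) : |entropy γ ψ ρ u| ≤ 4 * A * (ρ * u ^ 2 + ρ ^ γ) := by
  set b := ρ ^ thetaExp γ
  have hb : 0 ≤ b := rpow_nonneg hρ.le _
  have hintegral := abs_integral_mul_one_sub_sq_rpow_le (f := fun s => ψ (u + b * s))
    (M := A * (|u| + b) ^ 2) hlam fun s hs => (hψ_bound _).trans <| by
      rw [← sq_abs]; gcongr; exact abs_add_mul_le hb hs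
  calc |entropy γ ψ ρ u| ≤ ρ * (2 * (A * (|u| + b) ^ 2)) := by
        rw [entropy, abs_mul, abs_of_pos hρ]; gcongr
    _ ≤ ρ * (2 * (A * (2 * (|u| ^ 2 + b ^ 2)))) := by gcongr; exact add_sq_le
    _ = 4 * A * (ρ * u ^ 2 + ρ ^ γ) := by
        rw [← self_mul_rpow_thetaExp_sq hρ, sq_abs]; ring

lemma hasDerivAt_entropy (hlam : 0 ≤ lamExp γ) (hψ : Differentiable ℝ ψ)
    (hψ' : ∀ x, |deriv ψ x| ≤ A * |x|) (ρ u : ℝ) :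
    HasDerivAt (fun v => entropy γ ψ ρ v)
      (ρ * ∫ s in (-1:ℝ)..1, deriv ψ (u + ρ ^ thetaExp γ * s) * (1 - s ^ 2) ^ lamExp γ) u := by
  have hw : Continuous fun s : ℝ => (1 - s ^ 2) ^ lamExp γ :=
    (by fun_prop : Continuous fun s : ℝ => 1 - s ^ 2).rpow_const fun _ => Or.inr hlam
  exact (hasDerivAt_integral_comp_add_mul hψ hψ' (hw.intervalIntegrable _ _) _ u).const_mul ρ

lemma one_div_mul_sq_deriv_entropy_le (hlam : 0 ≤ lamExp γ) (hA : 0 ≤ A)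
    (hψ : Differentiable ℝ ψ) (hψ' : ∀ x, |deriv ψ x| ≤ A * |x|) (hρ : 0 < ρ) (u : ℝ) :
    (1 / ρ) * |deriv (fun v => entropy γ ψ ρ v) u| ^ 2 ≤ 8 * A ^ 2 * (ρ * u ^ 2 + ρ ^ γ) := by
  set b := ρ ^ thetaExp γ
  have hb : 0 ≤ b := rpow_nonneg hρ.le _
  have hintegral := abs_integral_mul_one_sub_sq_rpow_le (f := fun s => deriv ψ (u + b * s))
    (M := A * (|u| + b)) hlam fun s hs => (hψ' _).trans <| by
      gcongr; exact abs_add_mul_le hb hs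
  have hD : |deriv (fun v => entropy γ ψ ρ v) u| ≤ ρ * (2 * (A * (|u| + b))) := by
    rw [(hasDerivAt_entropy hlam hψ hψ' ρ u).deriv, abs_mul, abs_of_pos hρ]; gcongr
  calc (1 / ρ) * |deriv (fun v => entropy γ ψ ρ v) u| ^ 2
      ≤ (1 / ρ) * (ρ * (2 * (A * (|u| + b)))) ^ 2 := by gcongr
    _ = 4 * A ^ 2 * ρ * (|u| + b) ^ 2 := by field_simp; ring
    _ ≤ 4 * A ^ 2 * ρ * (2 * (|u| ^ 2 + b ^ 2)) := by gcongr; exact add_sq_le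
    _ = 8 * A ^ 2 * (ρ * u ^ 2 + ρ ^ γ) := by
        rw [← self_mul_rpow_thetaExp_sq hρ, sq_abs]; ring

lemma abs_entropyFlux_le (hγ : 1 < γ) (hγ3 : γ ≤ 3) (hA : 0 ≤ A)
    (hψ_bound : ∀ s, |ψ s| ≤ A * s ^ 2) (hρ : 0 < ρ) (u : ℝ) :
    |entropyFlux γ ψ ρ u| ≤ 8 * A * (ρ * |u| ^ 3 + ρ ^ (γ + thetaExp γ)) := by
  set θ := thetaExp γ
  set b := ρ ^ θ
  have hb : 0 ≤ b := rpow_nonneg hρ.le _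
  have hθb : θ * b ≤ b := mul_le_of_le_one_left hb (thetaExp_le_one hγ3)
  have hintegral := abs_integral_mul_one_sub_sq_rpow_le
    (f := fun s => (u + θ * b * s) * ψ (u + b * s)) (M := A * (|u| + b) ^ 3)
    (lamExp_nonneg hγ hγ3) fun s hs => by
      have hvel : |u + θ * b * s| ≤ |u| + b :=
        (abs_add_mul_le (mul_nonneg (thetaExp_pos hγ).le hb) hs).trans (by linarith)
      have hψs : |ψ (u + b * s)| ≤ A * (|u| + b) ^ 2 := (hψ_bound _).trans <| by
        rw [← sq_abs]; gcongr; exact abs_add_mul_le hb hs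
      calc |(u + θ * b * s) * ψ (u + b * s)| = |u + θ * b * s| * |ψ (u + b * s)| := abs_mul _ _
        _ ≤ (|u| + b) * (A * (|u| + b) ^ 2) := by gcongr
        _ = A * (|u| + b) ^ 3 := by ring
  calc |entropyFlux γ ψ ρ u| ≤ ρ * (2 * (A * (|u| + b) ^ 3)) := by
        rw [entropyFlux, abs_mul, abs_of_pos hρ]; gcongr
    _ ≤ ρ * (2 * (A * (2 ^ (3 - 1) * (|u| ^ 3 + b ^ 3)))) := by
        gcongr; exact add_pow_le (abs_nonneg u) hb 3
    _ = 8 * A * (ρ * |u| ^ 3 + ρ ^ (γ + θ)) := by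
        rw [← self_mul_rpow_thetaExp_cube hρ]; ring

end EntropyBounds

theorem entropy_subquadratic_growth_bounds_general (γ : ℝ) (hγ : 1 < γ) (hγ3 : γ ≤ 3)
    (ψ : ℝ → ℝ) (hψ : ContDiff ℝ 2 ψ)
    (A : ℝ) (hA : 0 < A)
    (hψ_bound : ∀ s : ℝ, |ψ s| ≤ A * s ^ 2)
    (hψ'_bound : ∀ s : ℝ, |deriv ψ s| ≤ A * |s|) :
    ∃ C : ℝ, 0 < C ∧ ∀ ρ : ℝ, 0 < ρ → ∀ u : ℝ,
      |entropy γ ψ ρ u| + (1 / ρ) * |deriv (fun v => entropy γ ψ ρ v) u| ^ 2 ≤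
        C * (1 + ρ * u ^ 2 + ρ ^ γ) ∧
      |entropyFlux γ ψ ρ u| ≤ C * (1 + ρ * |u| ^ 3 + ρ ^ (γ + thetaExp γ)) := by
  have hlam := lamExp_nonneg hγ hγ3
  have hψ_diff : Differentiable ℝ ψ := hψ.differentiable (by norm_num)
  refine ⟨8 * A ^ 2 + 8 * A, by positivity, fun ρ hρ u => ⟨?_, ?_⟩⟩
  · have hη := abs_entropy_le hlam hA.le hψ_bound hρ u
    have hD := one_div_mul_sq_deriv_entropy_le hlam hA.le hψ_diff hψ'_bound hρ u
    have hX : 0 ≤ ρ * u ^ 2 + ρ ^ γ := by positivity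
    nlinarith [mul_nonneg hA.le hX]
  · have hq := abs_entropyFlux_le hγ hγ3 hA.le hψ_bound hρ u
    have hX : 0 ≤ ρ * |u| ^ 3 + ρ ^ (γ + thetaExp γ) := by positivity
    nlinarith [mul_nonneg (sq_nonneg A) hX]

/-- For `1 < γ ≤ 3` and a convex `ψ ∈ C²(ℝ)` with `|ψ(s)| ≤ A s²` and `|ψ′(s)| ≤ A|s|`, there is
`C > 0` with `|η^ψ| + (1/ρ)|∂_u η^ψ|² ≤ C(1 + ρu² + ρ^γ)` and
`|q^ψ| ≤ C(1 + ρ|u|³ + ρ^{γ+θ})` for all `ρ > 0`, `u ∈ ℝ`. -/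
theorem entropy_subquadratic_growth_bounds (γ : ℝ) (hγ : 1 < γ) (hγ3 : γ ≤ 3)
    (ψ : ℝ → ℝ) (hψ : ContDiff ℝ 2 ψ) (hconv : ConvexOn ℝ Set.univ ψ)
    (A : ℝ) (hA : 0 < A)
    (hψ_bound : ∀ s : ℝ, |ψ s| ≤ A * s ^ 2)
    (hψ'_bound : ∀ s : ℝ, |deriv ψ s| ≤ A * |s|) :
    ∃ C : ℝ, 0 < C ∧ ∀ ρ : ℝ, 0 < ρ → ∀ u : ℝ,
      |entropy γ ψ ρ u| + (1 / ρ) * |deriv (fun v => entropy γ ψ ρ v) u| ^ 2 ≤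
        C * (1 + ρ * u ^ 2 + ρ ^ γ) ∧
      |entropyFlux γ ψ ρ u| ≤ C * (1 + ρ * |u| ^ 3 + ρ ^ (γ + thetaExp γ)) :=
  entropy_subquadratic_growth_bounds_general γ hγ hγ3 ψ hψ A hA hψ_bound hψ'_bound
end
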